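/- arXiv:2406.07327 — 6 statements merged into one kernel-verified Lean document; each statement's English description precedes it below -/
import Mathlib

section
/- For the DPO loss ℓ(π⁺, π⁻) = log(1 + α·(π⁻/π⁺)^β) with 0 < β < 1 and fixed π⁺ > 0, the partial derivative ∂ℓ/∂π⁺ tends to 0 as π⁻ → 0⁺. -/
open Real Filter Topology

/- Since `(π⁻/π⁺)^(β-1) · π⁻/(π⁺)² = (π⁻/π⁺)^β / π⁺`, the gradient is `g ((π⁻/π⁺)^β)` for a function
`g` continuous at `0` with `g 0 = 0`; and `(π⁻/π⁺)^β → 0` because `β > 0`. -/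

theorem Real.rpow_sub_one_mul_self {y : ℝ} (hy : y ≠ 0) (x : ℝ) : x ^ (y - 1) * x = x ^ y := by
  rcases eq_or_ne x 0 with rfl | hx
  · simp [zero_rpow hy]
  · rw [rpow_sub_one hx, div_mul_cancel₀ _ hx]

theorem dpo_chosen_grad_vanishes_general
    (α β πp : ℝ) (hβ : 0 < β) :
    Tendsto (fun πm : ℝ =>
        -(α * β / (1 + α * (πm / πp) ^ β)) * (πm / πp) ^ (β - 1) * (πm / πp ^ 2))
      (𝓝[>] 0) (𝓝 0) := by
  set g : ℝ → ℝ := fun s => -(α * β / (1 + α * s)) * (s / πp)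
  have hform : (fun πm : ℝ =>
      -(α * β / (1 + α * (πm / πp) ^ β)) * (πm / πp) ^ (β - 1) * (πm / πp ^ 2)) =
      fun πm => g ((πm / πp) ^ β) := by
    funext πm
    rw [← rpow_sub_one_mul_self hβ.ne' (πm / πp)]
    ring
  have hg : ContinuousAt g 0 := by fun_prop (disch := norm_num)
  have hratio : Tendsto (fun πm : ℝ => (πm / πp) ^ β) (𝓝 0) (𝓝 0) :=
    ((continuous_id.div_const πp).tendsto' 0 0 (zero_div πp)).rpow_const_nhds_zero hβ
  have hg0 : g 0 = 0 := by simp [g]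
  rw [hform]
  simpa only [hg0, Function.comp_def] using (hg.tendsto.comp hratio).mono_left nhdsWithin_le_nhds

/-- For the DPO loss with 0 < β < 1 and fixed π⁺ > 0, the partial derivative
∂ℓ/∂π⁺ = −(αβ/(1+α(π⁻/π⁺)^β))·(π⁻/π⁺)^(β−1)·(π⁻/(π⁺)²) tends to 0 as π⁻ → 0⁺. -/
theorem dpo_chosen_grad_vanishes
    (α β πp : ℝ) (hα : 0 < α) (hβ : 0 < β) (hβ1 : β < 1) (hπp : 0 < πp) :
    Tendsto (fun πm : ℝ =>
        -(α * β / (1 + α * (πm / πp) ^ β)) * (πm / πp) ^ (β - 1) * (πm / πp ^ 2))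
      (𝓝[>] 0) (𝓝 0) :=
  dpo_chosen_grad_vanishes_general α β πp hβ
end

section
/- As π⁻ → 0⁺ with π⁺ fixed, the partial derivative of the DPO loss with respect to π⁺ is asymptotically equivalent to −αβ·(π⁺)^(−β−1)·(π⁻)^β, i.e., their ratio tends to 1. -/
open Real Filter Topology

/-! Since `(π⁻/π⁺)^(β-1) · π⁻/(π⁺)² = (π⁺)^(-β-1) (π⁻)^β`, the ratio is exactly
`1 / (1 + α (π⁻/π⁺)^β)` for `π⁻ > 0`, and this tends to `1` because `β > 0`. -/

theorem div_rpow_sub_one_mul_div_sq {x c : ℝ} (hx : 0 < x) (hc : 0 < c) (β : ℝ) :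
    (x / c) ^ (β - 1) * (x / c ^ 2) = c ^ (-β - 1) * x ^ β := by
  rw [rpow_sub (div_pos hx hc), rpow_one, div_rpow hx.le hc.le,
    show -β - 1 = -(β + 1) by ring, rpow_neg hc.le, rpow_add hc, rpow_one]
  have : 0 < c ^ β := rpow_pos_of_pos hc β
  field_simp

theorem tendsto_one_div_one_add_mul_div_rpow {α β c : ℝ} (hβ : 0 < β) :
    Tendsto (fun x : ℝ => 1 / (1 + α * (x / c) ^ β)) (𝓝 0) (𝓝 1) := by
  have hcont : ContinuousAt (fun x : ℝ => 1 / (1 + α * (x / c) ^ β)) 0 := by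
    refine continuousAt_const.div
      (continuousAt_const.add (continuousAt_const.mul
        ((continuousAt_id.div_const c).rpow_const (Or.inr hβ.le)))) ?_
    simp [zero_rpow hβ.ne']
  simpa [zero_rpow hβ.ne'] using hcont.tendsto

theorem dpo_chosen_grad_asymptotic_general
    (α β πp : ℝ) (hα : 0 < α) (hβ : 0 < β) (hπp : 0 < πp) :
    Tendsto (fun πm : ℝ =>
        (-(α * β / (1 + α * (πm / πp) ^ β)) * (πm / πp) ^ (β - 1) * (πm / πp ^ 2)) /
          (-(α * β) * πp ^ (-β - 1) * πm ^ β))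
      (𝓝[>] 0) (𝓝 1) := by
  refine ((tendsto_one_div_one_add_mul_div_rpow (α := α) (c := πp) hβ).mono_left
    nhdsWithin_le_nhds).congr' ?_
  filter_upwards [self_mem_nhdsWithin] with πm (hπm : 0 < πm)
  have hden : 0 < 1 + α * (πm / πp) ^ β := by
    have := rpow_pos_of_pos (div_pos hπm hπp) β
    positivity
  have hpow : 0 < πp ^ (-β - 1) * πm ^ β := by
    have := rpow_pos_of_pos hπp (-β - 1)
    have := rpow_pos_of_pos hπm β
    positivity
  rw [mul_assoc _ ((πm / πp) ^ (β - 1)), div_rpow_sub_one_mul_div_sq hπm hπp,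
    mul_assoc (-(α * β))]
  field_simp

/-- As π⁻ → 0⁺ with π⁺ fixed, ∂ℓ/∂π⁺ is asymptotically −αβ·(π⁺)^(−β−1)·(π⁻)^β:
their ratio tends to 1. -/
theorem dpo_chosen_grad_asymptotic
    (α β πp : ℝ) (hα : 0 < α) (hβ : 0 < β) (hβ1 : β < 1) (hπp : 0 < πp) :
    Tendsto (fun πm : ℝ =>
        (-(α * β / (1 + α * (πm / πp) ^ β)) * (πm / πp) ^ (β - 1) * (πm / πp ^ 2)) /
          (-(α * β) * πp ^ (-β - 1) * πm ^ β))
      (𝓝[>] 0) (𝓝 1) :=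
  dpo_chosen_grad_asymptotic_general α β πp hα hβ hπp
end

section
/- For the flexible-β DPO loss ℓ(π⁺, π⁻) = log(1 + α·(π⁻)^β⁻/(π⁺)^β⁺), as π⁻ → 0⁺ with π⁺ > 0 fixed, the partial derivative with respect to π⁺ is asymptotically −αβ⁺·(π⁺)^(−β⁺−1)·(π⁻)^β⁻, and hence tends to 0. -/
/-!
Differentiating gives `∂ℓ/∂π⁺ = g(π⁻) / D(π⁻)` with `g(π⁻) = -αβ⁺ (π⁺)^(-β⁺-1) (π⁻)^β⁻` and
`D(π⁻) = 1 + α (π⁻)^β⁻ (π⁺)^(-β⁺)`. Since `β⁻ > 0`, `(π⁻)^β⁻ → 0`, so `D → 1` and `g → 0`: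
the ratio `∂ℓ/∂π⁺ / g = 1 / D` tends to `1` and `∂ℓ/∂π⁺` itself tends to `0`.
-/

open Real Filter Topology

lemma Real.deriv_log_one_add_mul_rpow {c r x : ℝ} (hx : x ≠ 0 ∨ 1 ≤ r)
    (hD : 1 + c * x ^ r ≠ 0) :
    deriv (fun p : ℝ => log (1 + c * p ^ r)) x = c * (r * x ^ (r - 1)) / (1 + c * x ^ r) :=
  ((((hasDerivAt_rpow_const hx).const_mul c).const_add 1).log hD).deriv

lemma Real.tendsto_rpow_nhdsGT_zero {r : ℝ} (hr : 0 < r) :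
    Tendsto (fun x : ℝ => x ^ r) (𝓝[>] 0) (𝓝 0) :=
  ((continuous_rpow_const hr.le).tendsto' 0 0 (zero_rpow hr.ne')).mono_left nhdsWithin_le_nhds

theorem flex_dpo_chosen_grad_general
    (α βp βm πp : ℝ) (hα : 0 < α) (hβp : 0 < βp) (hβm : 0 < βm)
    (hπp : 0 < πp) :
    Tendsto (fun πm : ℝ =>
        deriv (fun p : ℝ => Real.log (1 + α * πm ^ βm * p ^ (-βp))) πp /
          (-(α * βp) * πp ^ (-βp - 1) * πm ^ βm))
      (𝓝[>] 0) (𝓝 1) ∧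
    Tendsto (fun πm : ℝ =>
        deriv (fun p : ℝ => Real.log (1 + α * πm ^ βm * p ^ (-βp))) πp)
      (𝓝[>] 0) (𝓝 0) := by
  set D : ℝ → ℝ := fun πm => 1 + α * πm ^ βm * πp ^ (-βp)
  set g : ℝ → ℝ := fun πm => -(α * βp) * πp ^ (-βp - 1) * πm ^ βm
  have hpow := tendsto_rpow_nhdsGT_zero hβm
  have hD : Tendsto D (𝓝[>] 0) (𝓝 1) := by
    simpa only [mul_zero, zero_mul, add_zero] using (((hpow.const_mul α).mul_const (πp ^ (-βp))).const_add 1)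
  have hg : Tendsto g (𝓝[>] 0) (𝓝 0) := by
    simpa only [mul_zero] using hpow.const_mul (-(α * βp) * πp ^ (-βp - 1))
  have hderiv : ∀ᶠ πm in 𝓝[>] 0,
      deriv (fun p : ℝ => log (1 + α * πm ^ βm * p ^ (-βp))) πp = g πm / D πm := by
    filter_upwards [self_mem_nhdsWithin] with πm (hπm : 0 < πm)
    rw [deriv_log_one_add_mul_rpow (Or.inl hπp.ne') (by positivity)]
    simp only [g, D]
    ring
  have hg_ne : ∀ᶠ πm in 𝓝[>] 0, g πm ≠ 0 := by
    filter_upwards [self_mem_nhdsWithin] with πm (hπm : 0 < πm)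
    have : 0 < α * βp * πp ^ (-βp - 1) * πm ^ βm := by positivity
    simp only [g]
    linarith
  constructor
  · have hD_inv : Tendsto (fun πm => (D πm)⁻¹) (𝓝[>] 0) (𝓝 1⁻¹) := hD.inv₀ one_ne_zero
    rw [inv_one] at hD_inv
    refine hD_inv.congr' ?_
    filter_upwards [hderiv, hg_ne] with πm h h0
    rw [h, div_div_cancel_left' h0]
  · have hg_div_D : Tendsto (fun πm => g πm / D πm) (𝓝[>] 0) (𝓝 (0 / 1)) := hg.div hD one_ne_zero
    rw [zero_div] at hg_div_D
    exact hg_div_D.congr' (hderiv.mono fun _ h => h.symm)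

/-- Flexible-β DPO: ℓ(π⁺, π⁻) = log(1 + α·(π⁻)^β⁻·(π⁺)^(−β⁺)); as π⁻ → 0⁺ with π⁺
fixed, ∂ℓ/∂π⁺ is asymptotically −αβ⁺·(π⁺)^(−β⁺−1)·(π⁻)^β⁻ and tends to 0. -/
theorem flex_dpo_chosen_grad
    (α βp βm πp : ℝ) (hα : 0 < α) (hβp : 0 < βp) (hβm : 0 < βm) (hβm1 : βm < 1)
    (hπp : 0 < πp) :
    Tendsto (fun πm : ℝ =>
        deriv (fun p : ℝ => Real.log (1 + α * πm ^ βm * p ^ (-βp))) πp /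
          (-(α * βp) * πp ^ (-βp - 1) * πm ^ βm))
      (𝓝[>] 0) (𝓝 1) ∧
    Tendsto (fun πm : ℝ =>
        deriv (fun p : ℝ => Real.log (1 + α * πm ^ βm * p ^ (-βp))) πp)
      (𝓝[>] 0) (𝓝 0) :=
  flex_dpo_chosen_grad_general α βp βm πp hα hβp hβm hπp
end

section
/- For the SFT-regularized DPO loss ℓ(π⁺, π⁻) = log(1 + α·(π⁻/π⁺)^β) − γ·log(π⁺) with γ > 0, as π⁻ → 0⁺ with π⁺ > 0 fixed, the partial derivative with respect to π⁺ tends to −γ/π⁺, which is strictly negative. -/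
/-!
Differentiating in `p`, the SFT term contributes `-γ / p`, while the DPO term contributes
`-α β x / (p (1 + α x))` with `x = (m / p) ^ β`. Since `β > 0`, `x → 0` as `m → 0⁺`, so the DPO
contribution vanishes in the limit.
-/

open Real Filter Topology

theorem hasDerivAt_log_one_add_mul_div_rpow {α β m p : ℝ} (hm : m ≠ 0) (hp : p ≠ 0)
    (h : 1 + α * (m / p) ^ β ≠ 0) :
    HasDerivAt (fun q : ℝ => log (1 + α * (m / q) ^ β))
      (-(α * β * (m / p) ^ β) / (p * (1 + α * (m / p) ^ β))) p := by
  have hmp : m / p ≠ 0 := div_ne_zero hm hp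
  have hdiv : HasDerivAt (fun q : ℝ => m / q) (-(m / p ^ 2)) p := by
    simpa [div_eq_mul_inv, mul_comm] using (hasDerivAt_inv hp).const_mul m
  convert (((hdiv.rpow_const (Or.inl hmp)).const_mul α).const_add 1).log h using 1
  rw [rpow_sub_one hmp]
  field_simp

theorem tendsto_div_rpow_nhds_zero (p : ℝ) {β : ℝ} (hβ : 0 < β) :
    Tendsto (fun m : ℝ => (m / p) ^ β) (𝓝 0) (𝓝 0) := by
  have hdiv : Tendsto (fun m : ℝ => m / p) (𝓝 0) (𝓝 0) := by
    simpa using (continuous_id.div_const p).tendsto 0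
  simpa [zero_rpow hβ.ne', Function.comp_def] using
    (continuousAt_rpow_const 0 β (Or.inr hβ.le)).tendsto.comp hdiv

theorem sft_dpo_chosen_grad_limit_general
    (α β γ πp : ℝ) (hβ : 0 < β) (hγ : 0 < γ) (hπp : 0 < πp) :
    Tendsto (fun πm : ℝ =>
        deriv (fun p : ℝ => Real.log (1 + α * (πm / p) ^ β) - γ * Real.log p) πp)
      (𝓝[>] 0) (𝓝 (-(γ / πp))) ∧ -(γ / πp) < 0 := by
  set g : ℝ → ℝ := fun x => -(α * β * x) / (πp * (1 + α * x)) - γ / πp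
  have hx : Tendsto (fun πm : ℝ => (πm / πp) ^ β) (𝓝[>] 0) (𝓝 0) :=
    (tendsto_div_rpow_nhds_zero πp hβ).mono_left nhdsWithin_le_nhds
  have hne : ∀ᶠ πm in 𝓝[>] 0, 1 + α * (πm / πp) ^ β ≠ 0 := by
    have hdenom : Tendsto (fun πm : ℝ => 1 + α * (πm / πp) ^ β) (𝓝[>] 0) (𝓝 1) := by
      simpa using (hx.const_mul α).const_add 1
    exact hdenom.eventually_ne one_ne_zero
  have hderiv : ∀ᶠ πm in 𝓝[>] 0, g ((πm / πp) ^ β) =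
      deriv (fun p : ℝ => Real.log (1 + α * (πm / p) ^ β) - γ * Real.log p) πp := by
    filter_upwards [self_mem_nhdsWithin, hne] with πm hπm h
    refine (((hasDerivAt_log_one_add_mul_div_rpow hπm.ne' hπp.ne' h).sub
      ((hasDerivAt_log hπp.ne').const_mul γ)).deriv.trans ?_).symm
    simp only [g, div_eq_mul_inv]
  have hg : ContinuousAt g 0 := by
    refine ContinuousAt.sub (ContinuousAt.div (by fun_prop) (by fun_prop) ?_) continuousAt_const
    simp [hπp.ne']
  have hg0 : g 0 = -(γ / πp) := by simp [g, neg_div]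
  refine ⟨?_, neg_neg_of_pos (div_pos hγ hπp)⟩
  rw [← hg0]
  exact (hg.tendsto.comp hx).congr' hderiv

/-- SFT-regularized DPO: ℓ(π⁺, π⁻) = log(1 + α·(π⁻/π⁺)^β) − γ·log π⁺; as π⁻ → 0⁺
with π⁺ fixed, ∂ℓ/∂π⁺ tends to −γ/π⁺, which is strictly negative. -/
theorem sft_dpo_chosen_grad_limit
    (α β γ πp : ℝ) (hα : 0 < α) (hβ : 0 < β) (hβ1 : β < 1) (hγ : 0 < γ) (hπp : 0 < πp) :
    Tendsto (fun πm : ℝ =>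
        deriv (fun p : ℝ => Real.log (1 + α * (πm / p) ^ β) - γ * Real.log p) πp)
      (𝓝[>] 0) (𝓝 (-(γ / πp))) ∧ -(γ / πp) < 0 :=
  sft_dpo_chosen_grad_limit_general α β γ πp hβ hγ hπp
end

section
/- SimPO gradient limit (case β > L): let f(π⁻) = (β/(L·π⁻))·σ(−(c − (β/L)·log π⁻)) where σ is the sigmoid, c ∈ ℝ a constant, and L > 0. If β > L, then f(π⁻) → 0 as π⁻ → 0⁺. -/
open Real Filter Topology

/-!
With `r = β / L`, the function is `(r / x) · sigmoid (r log x - c)`. Since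
`sigmoid y ≤ exp y`, it is bounded by `r e^{-c} x^{r-1}`, written `r e^{-c} exp ((r - 1) log x)`,
which tends to `0` as `x → 0⁺` exactly when `r > 1`.
-/

lemma Real.sigmoid_le_exp (y : ℝ) : sigmoid y ≤ exp y := by
  have h := sigmoid_mul_rexp_neg y
  rw [exp_neg, ← div_eq_mul_inv, div_eq_iff (exp_pos y).ne'] at h
  rw [h]
  exact mul_le_of_le_one_left (exp_pos y).le (sigmoid_le_one _)

lemma tendsto_exp_mul_log_nhdsGT_zero {s : ℝ} (hs : 0 < s) :
    Tendsto (fun x => exp (s * log x)) (𝓝[>] 0) (𝓝 0) :=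
  tendsto_exp_atBot.comp (tendsto_log_nhdsGT_zero.const_mul_atBot hs)

lemma div_mul_sigmoid_mul_log_sub_le {r x : ℝ} (hr : 0 ≤ r) (hx : 0 < x) (c : ℝ) :
    r / x * sigmoid (r * log x - c) ≤ r * exp (-c) * exp ((r - 1) * log x) := calc
  r / x * sigmoid (r * log x - c) ≤ r / x * exp (r * log x - c) := by
    gcongr
    exact sigmoid_le_exp _
  _ = r * exp (-c) * exp ((r - 1) * log x) := by
    rw [div_eq_mul_inv, ← exp_log hx, ← exp_neg, log_exp, mul_assoc, mul_assoc, ← exp_add,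
      ← exp_add]
    congr 2
    ring

lemma tendsto_div_mul_sigmoid_mul_log_sub {r : ℝ} (hr : 1 < r) (c : ℝ) :
    Tendsto (fun x => r / x * sigmoid (r * log x - c)) (𝓝[>] 0) (𝓝 0) := by
  have hbound := (tendsto_exp_mul_log_nhdsGT_zero (sub_pos.mpr hr)).const_mul (r * exp (-c))
  rw [mul_zero] at hbound
  refine squeeze_zero' ?_ ?_ hbound
  · filter_upwards [self_mem_nhdsWithin] with x (hx : 0 < x)
    exact mul_nonneg (by positivity) (sigmoid_nonneg _)
  · filter_upwards [self_mem_nhdsWithin] with x (hx : 0 < x)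
    exact div_mul_sigmoid_mul_log_sub_le (by linarith) hx c

/-- SimPO gradient limit, case β > L: f(π⁻) = (β/(L·π⁻))·σ((β/L)·log π⁻ − c) → 0
as π⁻ → 0⁺, where σ(x) = 1/(1+e^(−x)). -/
theorem simpo_grad_limit_beta_gt
    (σ : ℝ → ℝ) (hσ : ∀ x, σ x = 1 / (1 + Real.exp (-x)))
    (β L c : ℝ) (hL : 0 < L) (hβ : L < β) :
    Tendsto (fun πm : ℝ => β / (L * πm) * σ (β / L * Real.log πm - c))
      (𝓝[>] 0) (𝓝 0) := by
  have hσ_eq : σ = sigmoid := funext fun x => by rw [hσ, sigmoid_def, one_div]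
  simp only [hσ_eq, ← div_div]
  exact tendsto_div_mul_sigmoid_mul_log_sub ((one_lt_div hL).mpr hβ) c
end

section
/- SimPO gradient limit (case β < L): let f(π⁻) = (β/(L·π⁻))·σ((β/L)·log π⁻ − c) with σ the sigmoid, c ∈ ℝ, L > 0. If 0 < β < L, then f(π⁻) → +∞ as π⁻ → 0⁺. -/
/-! Clearing the sigmoid, `f x = (β/L) / (x + exp c * x ^ (1 - β/L))`. Since `β < L` the exponent is
positive, so the denominator tends to `0` from above and `f` blows up. -/

open Real Filter Topology

lemma mul_one_add_exp_neg_mul_log_sub {x : ℝ} (hx : 0 < x) (a c : ℝ) :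
    x * (1 + exp (-(a * log x - c))) = x + exp c * x ^ (1 - a) := by
  have hpow : x ^ (1 - a) = x * exp (-(a * log x)) := by
    rw [sub_eq_add_neg, rpow_add hx, rpow_one, rpow_def_of_pos hx]
    ring_nf
  rw [hpow, neg_sub, sub_eq_add_neg, exp_add]
  ring

lemma tendsto_add_mul_rpow_nhdsGT_zero {s K : ℝ} (hs : 0 < s) (hK : 0 ≤ K) :
    Tendsto (fun x : ℝ => x + K * x ^ s) (𝓝[>] 0) (𝓝[>] 0) := by
  refine tendsto_nhdsWithin_of_tendsto_nhds_of_eventually_within _ ?_ ?_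
  · have hcont : Continuous fun x : ℝ => x + K * x ^ s := by
      fun_prop (disch := exact hs.le)
    simpa [zero_rpow hs.ne'] using (hcont.tendsto 0).mono_left nhdsWithin_le_nhds
  · filter_upwards [self_mem_nhdsWithin] with x (hx : 0 < x)
    exact add_pos_of_pos_of_nonneg hx (by positivity)

lemma tendsto_div_add_mul_rpow_nhdsGT_zero_atTop {a s K : ℝ} (ha : 0 < a) (hs : 0 < s)
    (hK : 0 ≤ K) : Tendsto (fun x : ℝ => a / (x + K * x ^ s)) (𝓝[>] 0) atTop := by
  simpa only [div_eq_mul_inv, Function.comp_def] using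
    (tendsto_inv_nhdsGT_zero.comp (tendsto_add_mul_rpow_nhdsGT_zero hs hK)).const_mul_atTop ha

theorem simpo_grad_limit_beta_lt_general
    (σ : ℝ → ℝ) (hσ : ∀ x, σ x = 1 / (1 + Real.exp (-x)))
    (β L c : ℝ) (hβ : 0 < β) (hβL : β < L) :
    Tendsto (fun πm : ℝ => β / (L * πm) * σ (β / L * Real.log πm - c))
      (𝓝[>] 0) atTop := by
  have hL : 0 < L := hβ.trans hβL
  have hexponent : 0 < 1 - β / L := sub_pos.2 ((div_lt_one hL).2 hβL)
  refine (tendsto_div_add_mul_rpow_nhdsGT_zero_atTop (div_pos hβ hL) hexponent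
    (exp_pos c).le).congr' ?_
  filter_upwards [self_mem_nhdsWithin] with x (hx : 0 < x)
  rw [hσ, ← mul_one_add_exp_neg_mul_log_sub hx]
  field_simp

/-- SimPO gradient limit, case β < L: f(π⁻) = (β/(L·π⁻))·σ((β/L)·log π⁻ − c) → +∞
as π⁻ → 0⁺, where σ(x) = 1/(1+e^(−x)). -/
theorem simpo_grad_limit_beta_lt
    (σ : ℝ → ℝ) (hσ : ∀ x, σ x = 1 / (1 + Real.exp (-x)))
    (β L c : ℝ) (hL : 0 < L) (hβ : 0 < β) (hβL : β < L) :
    Tendsto (fun πm : ℝ => β / (L * πm) * σ (β / L * Real.log πm - c))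
      (𝓝[>] 0) atTop :=
  simpo_grad_limit_beta_lt_general σ hσ β L c hβ hβL
end
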